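/- If a connected hole-free particle configuration σ on the triangular lattice has perimeter k, then the boundary of the corresponding union of hexagonal faces in the dual hexagonal lattice is a self-avoiding polygon with exactly 2k + 6 edges. -/

import Mathlib

open Finset

/-- The six neighbor displacement vectors of the triangular lattice Γ, realized on ℤ × ℤ. -/
def triNbrs : List (ℤ × ℤ) := [(1,0), (-1,0), (0,1), (0,-1), (1,1), (-1,-1)]

/-- Translation of a lattice point by a displacement. -/
def shift (v d : ℤ × ℤ) : ℤ × ℤ := (v.1 + d.1, v.2 + d.2)

/-- Adjacency in the triangular lattice Γ. -/
def TriAdj (v w : ℤ × ℤ) : Prop := (w.1 - v.1, w.2 - v.2) ∈ triNbrs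

/-- A particle configuration: a finite set of occupied vertices of Γ. -/
abbrev Config := Finset (ℤ × ℤ)

/-- A configuration is connected if it is nonempty and any two occupied vertices are
joined by a path through occupied vertices. -/
def ConnectedConfig (σ : Config) : Prop :=
  σ.Nonempty ∧ ∀ v ∈ σ, ∀ w ∈ σ,
    Relation.ReflTransGen (fun a b => TriAdj a b ∧ a ∈ σ ∧ b ∈ σ) v w

/-- The connected component of a vertex within the set of unoccupied vertices. -/
def compComponent (σ : Config) (v : ℤ × ℤ) : Set (ℤ × ℤ) :=
  {w | Relation.ReflTransGen (fun a b => TriAdj a b ∧ a ∉ σ ∧ b ∉ σ) v w}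

/-- A hole is a finite maximal component of unoccupied vertices; σ is hole-free
exactly when every unoccupied vertex lies in an infinite component of unoccupied vertices. -/
def HoleFree (σ : Config) : Prop := ∀ v, v ∉ σ → (compComponent σ v).Infinite

/-- Number of triangles of σ: lattice faces with all three vertices occupied.
The faces of Γ are the upward faces {v, v+(1,0), v+(1,1)} and the downward faces
{v, v+(0,1), v+(1,1)}. -/
def triangles (σ : Config) : ℕ :=
  (σ.filter (fun v => shift v (1,0) ∈ σ ∧ shift v (1,1) ∈ σ)).card +
  (σ.filter (fun v => shift v (0,1) ∈ σ ∧ shift v (1,1) ∈ σ)).card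

/-- Number of edges of σ: lattice edges with both endpoints occupied. -/
def edges (σ : Config) : ℕ :=
  (σ.filter (fun v => shift v (1,0) ∈ σ)).card +
  (σ.filter (fun v => shift v (0,1) ∈ σ)).card +
  (σ.filter (fun v => shift v (1,1) ∈ σ)).card

/-- Perimeter of σ: the length of the boundary walk around σ.  For a connected
hole-free configuration, the boundary walk traverses each occupied edge once for
each of its two adjacent lattice faces that is not fully occupied (so an edge
traversed twice is counted twice).  The two faces adjacent to the edge v–v+(1,0)
have third vertices v+(1,1) and v+(0,-1); those adjacent to v–v+(0,1) have third
vertices v+(1,1) and v+(-1,0); those adjacent to v–v+(1,1) have third vertices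
v+(1,0) and v+(0,1). -/
def perim (σ : Config) : ℕ :=
  (∑ v ∈ σ.filter (fun v => shift v (1,0) ∈ σ),
    ((if shift v (1,1) ∈ σ then 0 else 1) + (if shift v (0,-1) ∈ σ then 0 else 1))) +
  (∑ v ∈ σ.filter (fun v => shift v (0,1) ∈ σ),
    ((if shift v (1,1) ∈ σ then 0 else 1) + (if shift v (-1,0) ∈ σ then 0 else 1))) +
  (∑ v ∈ σ.filter (fun v => shift v (1,1) ∈ σ),
    ((if shift v (1,0) ∈ σ then 0 else 1) + (if shift v (0,1) ∈ σ then 0 else 1)))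

/-- Lexicographic order on lattice points, used to normalize configurations up to
translation. -/
def lexLe (a b : ℤ × ℤ) : Prop := a.1 < b.1 ∨ (a.1 = b.1 ∧ a.2 ≤ b.2)

/-- A configuration is normalized if its lexicographically least vertex is the origin;
each translation equivalence class of configurations contains exactly one normalized
representative, so normalized configurations count configurations up to translation. -/
def Normalized (σ : Config) : Prop := ((0,0) : ℤ × ℤ) ∈ σ ∧ ∀ v ∈ σ, lexLe (0,0) v

/-- A function is subexponential if it is eventually dominated by every exponential. -/
def Subexp (f : ℕ → ℝ) : Prop := ∀ c : ℝ, 1 < c → ∀ᶠ k in Filter.atTop, f k ≤ c ^ k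

/-- The number of edges of the boundary of A_σ, the union of the hexagonal faces of
the dual hexagonal lattice corresponding to occupied vertices of σ.  An edge of the
hexagonal lattice corresponds to an edge of the triangular lattice between the two
vertices whose hexagons it separates; it lies on the boundary of A_σ exactly when
one of these vertices is occupied and the other is not. -/
def hexBoundaryEdges (σ : Config) : ℕ :=
  ∑ v ∈ σ, triNbrs.countP (fun d => decide (shift v d ∉ σ))

/-!
Counting each occupied edge from both of its endpoints gives `hexBoundaryEdges σ = 6 V - 2 E`,
and counting it from its two adjacent faces gives `perim σ = 2 E - 3 T`, so the claim is Euler's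
formula `V - E + T = 1` for connected hole-free configurations.

Euler's formula is proved by induction, deleting the lexicographically largest particle `v`. Its
occupied neighbours lie among `a = v - (1,0)`, `b = v - (0,1)` and `c = v - (1,1)`, and every
component of `σ \ {v}` is hole-free and contains one of them. The count balances provided
`σ \ {v}` has two components when `a` and `b` are occupied but `c` is empty. Indeed, a path from
`a` to `b` avoiding `v` would close up through `v` to a cycle winding an odd number of times
around the empty site `c`, which is impossible because `c` lies in the infinite free region.
Winding numbers mod 2 are counted as crossings with a horizontal ray; moving the base point to a
free neighbour changes the crossing cochain by a coboundary, and for a base point far away it is a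
coboundary outright.
-/

lemma shift_eq_add (v d : ℤ × ℤ) : shift v d = v + d := rfl

lemma triAdj_iff_exists {x y : ℤ × ℤ} : TriAdj x y ↔ ∃ d ∈ triNbrs, y = x + d := by
  unfold TriAdj
  constructor
  · intro h
    exact ⟨_, h, by ext <;> simp⟩
  · rintro ⟨d, hd, rfl⟩
    simpa using hd

lemma triAdj_iff {x y : ℤ × ℤ} : TriAdj x y ↔
    (y.1 = x.1 + 1 ∧ y.2 = x.2) ∨ (y.1 = x.1 - 1 ∧ y.2 = x.2) ∨
    (y.1 = x.1 ∧ y.2 = x.2 + 1) ∨ (y.1 = x.1 ∧ y.2 = x.2 - 1) ∨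
    (y.1 = x.1 + 1 ∧ y.2 = x.2 + 1) ∨ (y.1 = x.1 - 1 ∧ y.2 = x.2 - 1) := by
  simp only [TriAdj, triNbrs, List.mem_cons, List.not_mem_nil, or_false, Prod.ext_iff]
  omega

lemma TriAdj.symm {x y : ℤ × ℤ} (h : TriAdj x y) : TriAdj y x := by
  rw [triAdj_iff] at h ⊢
  omega

lemma TriAdj.ne {x y : ℤ × ℤ} (h : TriAdj x y) : x ≠ y := by
  rintro rfl
  rw [triAdj_iff] at h
  omega

lemma TriAdj.exists_eq_add_or_eq_add {p q : ℤ × ℤ} (h : TriAdj p q) :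
    ∃ d : ℤ × ℤ, (d = (1,0) ∨ d = (0,1) ∨ d = (1,1)) ∧ (q = p + d ∨ p = q + d) := by
  rw [triAdj_iff] at h
  rcases h with h | h | h | h | h | h
  · exact ⟨(1,0), by simp, .inl (Prod.ext (by simp; omega) (by simp; omega))⟩
  · exact ⟨(1,0), by simp, .inr (Prod.ext (by simp; omega) (by simp; omega))⟩
  · exact ⟨(0,1), by simp, .inl (Prod.ext (by simp; omega) (by simp; omega))⟩
  · exact ⟨(0,1), by simp, .inr (Prod.ext (by simp; omega) (by simp; omega))⟩
  · exact ⟨(1,1), by simp, .inl (Prod.ext (by simp; omega) (by simp; omega))⟩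
  · exact ⟨(1,1), by simp, .inr (Prod.ext (by simp; omega) (by simp; omega))⟩

lemma card_filter_eq_of_translate {G : Type*} [AddGroup G] [DecidableEq G] (s : Finset G)
    {p q : G → Prop} [DecidablePred p] [DecidablePred q] (d : G)
    (h : ∀ v, (v ∈ s ∧ p v) ↔ (v + d ∈ s ∧ q (v + d))) :
    #(s.filter p) = #(s.filter q) := by
  refine Finset.card_nbij' (· + d) (· - d) (fun v hv => ?_) (fun w hw => ?_) (fun v _ => ?_)
    (fun w _ => ?_)
  · simpa using (h v).1 (by simpa using hv)
  · simpa [h] using hw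
  · simp
  · simp

lemma card_filter_add_mem_eq {G : Type*} [AddGroup G] [DecidableEq G] (s : Finset G)
    {d d' : G} (hdd' : d + d' = 0) :
    #(s.filter (· + d ∈ s)) = #(s.filter (· + d' ∈ s)) :=
  card_filter_eq_of_translate s d fun v => by rw [add_assoc, hdd', add_zero, and_comm]

lemma sum_ite_add_card_filter {α : Type*} (s : Finset α) (p q : α → Prop)
    [DecidablePred p] [DecidablePred q] :
    ∑ v ∈ s.filter p, (if q v then 0 else 1) + #(s.filter fun v => p v ∧ q v) =
      #(s.filter p) := by
  rw [← Finset.filter_filter, add_comm, Finset.card_filter q, ← Finset.sum_add_distrib]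
  refine (Finset.sum_congr rfl fun v _ => ?_).trans (Finset.card_eq_sum_ones _).symm
  split_ifs <;> rfl

lemma hexBoundaryEdges_add_two_mul_edges (σ : Config) :
    hexBoundaryEdges σ + 2 * edges σ = 6 * #σ := by
  have hsplit : ∀ d : ℤ × ℤ,
      ∑ v ∈ σ, (if shift v d ∉ σ then 1 else 0) + #(σ.filter (shift · d ∈ σ)) = #σ := fun d => by
    rw [Finset.sum_boole, Nat.cast_id, add_comm, Finset.card_filter_add_card_filter_not]
  have hcount : ∀ v, triNbrs.countP (fun d => decide (shift v d ∉ σ)) =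
      (if shift v (1,0) ∉ σ then 1 else 0) + (if shift v (-1,0) ∉ σ then 1 else 0) +
      (if shift v (0,1) ∉ σ then 1 else 0) + (if shift v (0,-1) ∉ σ then 1 else 0) +
      (if shift v (1,1) ∉ σ then 1 else 0) + (if shift v (-1,-1) ∉ σ then 1 else 0) := fun v => by
    simp only [triNbrs, List.countP_cons, List.countP_nil, decide_eq_true_eq]
    ring
  have h₁ : #(σ.filter (shift · (1,0) ∈ σ)) = #(σ.filter (shift · (-1,0) ∈ σ)) :=
    card_filter_add_mem_eq σ (d := (1,0)) (by simp)
  have h₂ : #(σ.filter (shift · (0,1) ∈ σ)) = #(σ.filter (shift · (0,-1) ∈ σ)) :=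
    card_filter_add_mem_eq σ (d := (0,1)) (by simp)
  have h₃ : #(σ.filter (shift · (1,1) ∈ σ)) = #(σ.filter (shift · (-1,-1) ∈ σ)) :=
    card_filter_add_mem_eq σ (d := (1,1)) (by simp)
  have := hsplit (1,0); have := hsplit (-1,0); have := hsplit (0,1)
  have := hsplit (0,-1); have := hsplit (1,1); have := hsplit (-1,-1)
  simp only [hexBoundaryEdges, edges, hcount, Finset.sum_add_distrib]
  omega

lemma perim_add_three_mul_triangles (σ : Config) :
    perim σ + 3 * triangles σ = 2 * edges σ := by
  have hdown : #(σ.filter fun v => shift v (1,0) ∈ σ ∧ shift v (0,-1) ∈ σ) =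
      #(σ.filter fun v => shift v (0,1) ∈ σ ∧ shift v (1,1) ∈ σ) :=
    card_filter_eq_of_translate σ (0,-1) fun v => by
      simp [shift_eq_add, add_assoc, Prod.mk_zero_zero]; tauto
  have hup : #(σ.filter fun v => shift v (0,1) ∈ σ ∧ shift v (-1,0) ∈ σ) =
      #(σ.filter fun v => shift v (1,0) ∈ σ ∧ shift v (1,1) ∈ σ) :=
    card_filter_eq_of_translate σ (-1,0) fun v => by
      simp [shift_eq_add, add_assoc, Prod.mk_zero_zero]; tauto
  have hup' : #(σ.filter fun v => shift v (1,1) ∈ σ ∧ shift v (1,0) ∈ σ) =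
      #(σ.filter fun v => shift v (1,0) ∈ σ ∧ shift v (1,1) ∈ σ) := by simp only [and_comm]
  have hdown' : #(σ.filter fun v => shift v (1,1) ∈ σ ∧ shift v (0,1) ∈ σ) =
      #(σ.filter fun v => shift v (0,1) ∈ σ ∧ shift v (1,1) ∈ σ) := by simp only [and_comm]
  have := sum_ite_add_card_filter σ (shift · (1,0) ∈ σ) (shift · (1,1) ∈ σ)
  have := sum_ite_add_card_filter σ (shift · (1,0) ∈ σ) (shift · (0,-1) ∈ σ)
  have := sum_ite_add_card_filter σ (shift · (0,1) ∈ σ) (shift · (1,1) ∈ σ)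
  have := sum_ite_add_card_filter σ (shift · (0,1) ∈ σ) (shift · (-1,0) ∈ σ)
  have := sum_ite_add_card_filter σ (shift · (1,1) ∈ σ) (shift · (1,0) ∈ σ)
  have := sum_ite_add_card_filter σ (shift · (1,1) ∈ σ) (shift · (0,1) ∈ σ)
  simp only [perim, triangles, edges, Finset.sum_add_distrib]
  omega

def OccAdj (σ : Config) (x y : ℤ × ℤ) : Prop := TriAdj x y ∧ x ∈ σ ∧ y ∈ σ

def FreeAdj (σ : Config) (x y : ℤ × ℤ) : Prop := TriAdj x y ∧ x ∉ σ ∧ y ∉ σ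

instance (σ : Config) : Std.Symm (OccAdj σ) := ⟨fun _ _ ⟨h, hx, hy⟩ => ⟨h.symm, hy, hx⟩⟩

lemma compComponent_subset_of_subset {σ τ : Config} (h : τ ⊆ σ) (w : ℤ × ℤ) :
    compComponent σ w ⊆ compComponent τ w := fun _ hx =>
  Relation.ReflTransGen.mono (fun _ _ ⟨hab, ha, hb⟩ => ⟨hab, mt (@h _) ha, mt (@h _) hb⟩) _ _ hx

lemma compComponent_subset_of_reflTransGen {τ : Config} {w u : ℤ × ℤ}
    (h : Relation.ReflTransGen (FreeAdj τ) w u) : compComponent τ u ⊆ compComponent τ w :=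
  fun _ hx => h.trans hx

lemma HoleFree.of_subset {σ τ : Config} (hσ : HoleFree σ) (hsub : τ ⊆ σ)
    (hesc : ∀ w ∈ σ, w ∉ τ → ∃ u ∉ σ, Relation.ReflTransGen (FreeAdj τ) w u) :
    HoleFree τ := by
  intro w hw
  by_cases hwσ : w ∈ σ
  · obtain ⟨u, hu, hwu⟩ := hesc w hwσ hw
    exact ((hσ u hu).mono (compComponent_subset_of_subset hsub u)).mono
      (compComponent_subset_of_reflTransGen hwu)
  · exact (hσ w hwσ).mono (compComponent_subset_of_subset hsub w)

open Classical in
noncomputable def occComponent (τ : Config) (a : ℤ × ℤ) : Config :=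
  τ.filter (Relation.ReflTransGen (OccAdj τ) a)

section Components

variable {τ : Config} {a b x : ℤ × ℤ}

lemma mem_occComponent :
    x ∈ occComponent τ a ↔ x ∈ τ ∧ Relation.ReflTransGen (OccAdj τ) a x := by
  classical
  simp [occComponent]

lemma occComponent_subset : occComponent τ a ⊆ τ := fun _ hx => (mem_occComponent.1 hx).1

lemma reflTransGen_occAdj_occComponent (h : Relation.ReflTransGen (OccAdj τ) a x) :
    Relation.ReflTransGen (OccAdj (occComponent τ a)) a x := by
  induction h with
  | refl => exact .refl
  | tail hay hyz ih =>
    exact ih.tail ⟨hyz.1, mem_occComponent.2 ⟨hyz.2.1, hay⟩,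
      mem_occComponent.2 ⟨hyz.2.2, hay.tail hyz⟩⟩

lemma connectedConfig_occComponent (ha : a ∈ τ) : ConnectedConfig (occComponent τ a) :=
  ⟨⟨a, mem_occComponent.2 ⟨ha, .refl⟩⟩, fun _ hx _ hy =>
    (symm (reflTransGen_occAdj_occComponent (mem_occComponent.1 hx).2)).trans
      (reflTransGen_occAdj_occComponent (mem_occComponent.1 hy).2)⟩

lemma notMem_occComponent_of_reflTransGen {w t : ℤ × ℤ} (hw : w ∈ τ)
    (hwa : w ∉ occComponent τ a) (h : Relation.ReflTransGen (OccAdj τ) w t) :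
    t ∉ occComponent τ a := fun ht =>
  hwa (mem_occComponent.2 ⟨hw, (mem_occComponent.1 ht).2.trans (symm h)⟩)

lemma reflTransGen_freeAdj_of_notMem_occComponent {w t : ℤ × ℤ} (hw : w ∈ τ)
    (hwa : w ∉ occComponent τ a) (h : Relation.ReflTransGen (OccAdj τ) w t) :
    Relation.ReflTransGen (FreeAdj (occComponent τ a)) w t := by
  induction h with
  | refl => exact .refl
  | tail hwy hyz ih =>
    exact ih.tail ⟨hyz.1, notMem_occComponent_of_reflTransGen hw hwa hwy,
      notMem_occComponent_of_reflTransGen hw hwa (hwy.tail hyz)⟩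

lemma disjoint_occComponent (hab : ¬Relation.ReflTransGen (OccAdj τ) a b) :
    Disjoint (occComponent τ a) (occComponent τ b) :=
  Finset.disjoint_left.2 fun _ hxa hxb =>
    hab ((mem_occComponent.1 hxa).2.trans (symm (mem_occComponent.1 hxb).2))

lemma not_triAdj_of_mem_occComponent (hab : ¬Relation.ReflTransGen (OccAdj τ) a b) :
    ∀ x ∈ occComponent τ a, ∀ y ∈ occComponent τ b, ¬TriAdj x y := fun _ hx _ hy hxy => by
  obtain ⟨hxτ, hax⟩ := mem_occComponent.1 hx
  obtain ⟨hyτ, hby⟩ := mem_occComponent.1 hy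
  exact hab ((hax.tail ⟨hxy, hxτ, hyτ⟩).trans (symm hby))

end Components

section Erase

variable {σ : Config} {v : ℤ × ℤ}

lemma exists_occAdj_reflTransGen_erase {x : ℤ × ℤ} (h : Relation.ReflTransGen (OccAdj σ) x v)
    (hx : x ≠ v) : ∃ t, OccAdj σ t v ∧ Relation.ReflTransGen (OccAdj (σ.erase v)) x t := by
  induction h using Relation.ReflTransGen.head_induction_on with
  | refl => exact absurd rfl hx
  | @head x y hxy _ ih =>
    by_cases hy : y = v
    · subst hy
      exact ⟨x, hxy, .refl⟩
    · obtain ⟨t, htv, hyt⟩ := ih hy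
      exact ⟨t, htv, .head ⟨hxy.1, Finset.mem_erase.2 ⟨hx, hxy.2.1⟩,
        Finset.mem_erase.2 ⟨hy, hxy.2.2⟩⟩ hyt⟩

lemma holeFree_occComponent_erase {u : ℤ × ℤ} (hconn : ConnectedConfig σ) (hhole : HoleFree σ)
    (hv : v ∈ σ) (hu : u ∉ σ) (hvu : TriAdj v u) (a : ℤ × ℤ) :
    HoleFree (occComponent (σ.erase v) a) := by
  have hsub : occComponent (σ.erase v) a ⊆ σ :=
    occComponent_subset.trans (Finset.erase_subset _ _)
  have hvτ : v ∉ occComponent (σ.erase v) a := fun h => by simpa using occComponent_subset h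
  have hvu' : Relation.ReflTransGen (FreeAdj (occComponent (σ.erase v) a)) v u :=
    .single ⟨hvu, hvτ, mt (@hsub _) hu⟩
  refine hhole.of_subset hsub fun w hw hwτ => ⟨u, hu, ?_⟩
  by_cases hwv : w = v
  · exact hwv ▸ hvu'
  · obtain ⟨t, htv, hwt⟩ := exists_occAdj_reflTransGen_erase (hconn.2 w hw v hv) hwv
    have hw' : w ∈ σ.erase v := Finset.mem_erase.2 ⟨hwv, hw⟩
    exact (reflTransGen_freeAdj_of_notMem_occComponent hw' hwτ hwt).trans
      (.head ⟨htv.1, notMem_occComponent_of_reflTransGen hw' hwτ hwt, hvτ⟩ hvu')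

lemma erase_eq_occComponent_of_forall {s : ℤ × ℤ} (hconn : ConnectedConfig σ) (hv : v ∈ σ)
    (h : ∀ t, OccAdj σ t v → Relation.ReflTransGen (OccAdj (σ.erase v)) s t) :
    σ.erase v = occComponent (σ.erase v) s := by
  refine subset_antisymm (fun x hx => ?_) occComponent_subset
  obtain ⟨hxv, hxσ⟩ := Finset.mem_erase.1 hx
  obtain ⟨t, htv, hxt⟩ := exists_occAdj_reflTransGen_erase (hconn.2 x hxσ v hv) hxv
  exact mem_occComponent.2 ⟨hx, (h t htv).trans (symm hxt)⟩

lemma erase_eq_union_occComponent {a b : ℤ × ℤ} (hconn : ConnectedConfig σ) (hv : v ∈ σ)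
    (h : ∀ t, OccAdj σ t v → t = a ∨ t = b) :
    σ.erase v = occComponent (σ.erase v) a ∪ occComponent (σ.erase v) b := by
  refine subset_antisymm (fun x hx => ?_)
    (Finset.union_subset occComponent_subset occComponent_subset)
  obtain ⟨hxv, hxσ⟩ := Finset.mem_erase.1 hx
  obtain ⟨t, htv, hxt⟩ := exists_occAdj_reflTransGen_erase (hconn.2 x hxσ v hv) hxv
  rcases h t htv with rfl | rfl
  · exact Finset.mem_union_left _ (mem_occComponent.2 ⟨hx, symm hxt⟩)
  · exact Finset.mem_union_right _ (mem_occComponent.2 ⟨hx, symm hxt⟩)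

end Erase

def eulerChar (σ : Config) : ℤ := #σ + triangles σ - edges σ

lemma eulerChar_empty : eulerChar ∅ = 0 := by simp [eulerChar, edges, triangles]

lemma card_filter_union_of_forall_iff {α : Type*} [DecidableEq α] {s₁ s₂ : Finset α}
    (hd : Disjoint s₁ s₂) {p q₁ q₂ : α → Prop} [DecidablePred p] [DecidablePred q₁]
    [DecidablePred q₂] (h₁ : ∀ w ∈ s₁, p w ↔ q₁ w) (h₂ : ∀ w ∈ s₂, p w ↔ q₂ w) :
    #((s₁ ∪ s₂).filter p) = #(s₁.filter q₁) + #(s₂.filter q₂) := by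
  rw [Finset.filter_union, Finset.card_union_of_disjoint (Finset.disjoint_filter_filter hd),
    Finset.filter_congr h₁, Finset.filter_congr h₂]

section Union

variable {σ₁ σ₂ : Config}

lemma shift_mem_union_iff_left (hnadj : ∀ x ∈ σ₁, ∀ y ∈ σ₂, ¬TriAdj x y) {w d : ℤ × ℤ}
    (hw : w ∈ σ₁) (hd : d ∈ triNbrs) : shift w d ∈ σ₁ ∪ σ₂ ↔ shift w d ∈ σ₁ := by
  rw [Finset.mem_union, or_iff_left_iff_imp]
  exact fun h => absurd (triAdj_iff_exists.2 ⟨d, hd, rfl⟩) (hnadj w hw _ h)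

lemma shift_mem_union_iff_right (hnadj : ∀ x ∈ σ₁, ∀ y ∈ σ₂, ¬TriAdj x y) {w d : ℤ × ℤ}
    (hw : w ∈ σ₂) (hd : d ∈ triNbrs) : shift w d ∈ σ₁ ∪ σ₂ ↔ shift w d ∈ σ₂ := by
  rw [Finset.union_comm]
  exact shift_mem_union_iff_left (fun x hx y hy h => hnadj y hy x hx h.symm) hw hd

lemma eulerChar_union (hd : Disjoint σ₁ σ₂) (hnadj : ∀ x ∈ σ₁, ∀ y ∈ σ₂, ¬TriAdj x y) :
    eulerChar (σ₁ ∪ σ₂) = eulerChar σ₁ + eulerChar σ₂ := by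
  have hl := fun {w} (hw : w ∈ σ₁) d (hd : d ∈ triNbrs) => shift_mem_union_iff_left hnadj hw hd
  have hr := fun {w} (hw : w ∈ σ₂) d (hd : d ∈ triNbrs) => shift_mem_union_iff_right hnadj hw hd
  simp only [eulerChar, edges, triangles, Finset.card_union_of_disjoint hd]
  rw [card_filter_union_of_forall_iff hd (fun w hw => hl hw (1,0) (by decide))
      (fun w hw => hr hw (1,0) (by decide)),
    card_filter_union_of_forall_iff hd (fun w hw => hl hw (0,1) (by decide))
      (fun w hw => hr hw (0,1) (by decide)),
    card_filter_union_of_forall_iff hd (fun w hw => hl hw (1,1) (by decide))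
      (fun w hw => hr hw (1,1) (by decide)),
    card_filter_union_of_forall_iff hd
      (fun w hw => and_congr (hl hw (1,0) (by decide)) (hl hw (1,1) (by decide)))
      (fun w hw => and_congr (hr hw (1,0) (by decide)) (hr hw (1,1) (by decide))),
    card_filter_union_of_forall_iff hd
      (fun w hw => and_congr (hl hw (0,1) (by decide)) (hl hw (1,1) (by decide)))
      (fun w hw => and_congr (hr hw (0,1) (by decide)) (hr hw (1,1) (by decide)))]
  push_cast
  ring

end Union

section LexMax

variable {σ : Config} {v : ℤ × ℤ}

lemma shift_notMem_of_lexMax (hmax : ∀ w ∈ σ, toLex w ≤ toLex v) {d : ℤ × ℤ}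
    (hd : 0 < d.1 ∨ d.1 = 0 ∧ 0 < d.2) : shift v d ∉ σ := fun h => by
  have := Prod.Lex.toLex_le_toLex.1 (hmax _ h)
  simp only [shift] at this
  omega

lemma eq_of_occAdj_of_lexMax {t : ℤ × ℤ} (hmax : ∀ w ∈ σ, toLex w ≤ toLex v)
    (h : OccAdj σ t v) : t = v - (1,0) ∨ t = v - (0,1) ∨ t = v - (1,1) := by
  have hlex := Prod.Lex.toLex_le_toLex.1 (hmax t h.2.1)
  have hadj := triAdj_iff.1 h.1
  simp only [Prod.ext_iff, Prod.fst_sub, Prod.snd_sub]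
  omega

lemma filter_erase_shift_mem {d : ℤ × ℤ} (hvd : shift v d ∉ σ) :
    (σ.erase v).filter (shift · d ∈ σ.erase v) = (σ.filter (shift · d ∈ σ)).erase (v - d) := by
  ext w
  simp only [Finset.mem_filter, Finset.mem_erase]
  simp only [shift_eq_add, ne_eq, ← eq_sub_iff_add_eq]
  constructor
  · rintro ⟨⟨-, hw⟩, hwd, hwdσ⟩
    exact ⟨hwd, hw, hwdσ⟩
  · rintro ⟨hwd, hw, hwdσ⟩
    refine ⟨⟨?_, hw⟩, hwd, hwdσ⟩
    rintro rfl
    exact hvd hwdσ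

lemma card_filter_shift_mem_erase {d : ℤ × ℤ} (hv : v ∈ σ) (hvd : shift v d ∉ σ) :
    #(σ.filter (shift · d ∈ σ)) =
      #((σ.erase v).filter (shift · d ∈ σ.erase v)) + if v - d ∈ σ then 1 else 0 := by
  have hmem : v - d ∈ σ.filter (shift · d ∈ σ) ↔ v - d ∈ σ := by
    rw [Finset.mem_filter, shift_eq_add, sub_add_cancel]
    exact and_iff_left hv
  rw [filter_erase_shift_mem hvd]
  by_cases h : v - d ∈ σ
  · rw [if_pos h, Finset.card_erase_add_one (hmem.2 h)]
  · rw [if_neg h, add_zero, Finset.erase_eq_of_notMem (mt hmem.1 h)]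

lemma filter_erase_shift_mem_and {d₁ d₂ : ℤ × ℤ} (h₁ : shift v d₁ ∉ σ)
    (h₂ : shift (v - d₁) d₂ ∉ σ) :
    (σ.erase v).filter (fun w => shift w d₁ ∈ σ.erase v ∧ shift w d₂ ∈ σ.erase v) =
      (σ.filter fun w => shift w d₁ ∈ σ ∧ shift w d₂ ∈ σ).erase (v - d₂) := by
  ext w
  simp only [Finset.mem_filter, Finset.mem_erase]
  simp only [shift_eq_add, ne_eq, ← eq_sub_iff_add_eq] at h₂ ⊢
  constructor
  · rintro ⟨⟨-, hw⟩, ⟨-, hw₁⟩, hwd₂, hw₂⟩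
    exact ⟨hwd₂, hw, hw₁, hw₂⟩
  · rintro ⟨hwd₂, hw, hw₁, hw₂⟩
    refine ⟨⟨?_, hw⟩, ⟨?_, hw₁⟩, hwd₂, hw₂⟩
    · rintro rfl
      exact h₁ hw₁
    · rintro rfl
      exact h₂ hw₂

lemma card_filter_shift_mem_and_erase {d₁ d₂ : ℤ × ℤ} (hv : v ∈ σ) (h₁ : shift v d₁ ∉ σ)
    (h₂ : shift (v - d₁) d₂ ∉ σ) :
    #(σ.filter fun w => shift w d₁ ∈ σ ∧ shift w d₂ ∈ σ) =
      #((σ.erase v).filter fun w => shift w d₁ ∈ σ.erase v ∧ shift w d₂ ∈ σ.erase v) +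
        if v - d₂ ∈ σ ∧ shift (v - d₂) d₁ ∈ σ then 1 else 0 := by
  have hmem : v - d₂ ∈ (σ.filter fun w => shift w d₁ ∈ σ ∧ shift w d₂ ∈ σ) ↔
      v - d₂ ∈ σ ∧ shift (v - d₂) d₁ ∈ σ := by
    rw [Finset.mem_filter, shift_eq_add (v - d₂) d₂, sub_add_cancel]
    exact and_congr_right fun _ => and_iff_left hv
  rw [filter_erase_shift_mem_and h₁ h₂]
  by_cases h : v - d₂ ∈ σ ∧ shift (v - d₂) d₁ ∈ σ
  · rw [if_pos h, Finset.card_erase_add_one (hmem.2 h)]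
  · rw [if_neg h, add_zero, Finset.erase_eq_of_notMem (mt hmem.1 h)]

lemma eulerChar_eq_eulerChar_erase_of_lexMax (hv : v ∈ σ) (hmax : ∀ w ∈ σ, toLex w ≤ toLex v) :
    eulerChar σ = eulerChar (σ.erase v) + 1
      + (if v - (1,1) ∈ σ ∧ v - (0,1) ∈ σ then 1 else 0)
      + (if v - (1,1) ∈ σ ∧ v - (1,0) ∈ σ then 1 else 0)
      - (if v - (1,0) ∈ σ then 1 else 0) - (if v - (0,1) ∈ σ then 1 else 0)
      - (if v - (1,1) ∈ σ then 1 else 0) := by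
  have h₁₀ : shift v (1,0) ∉ σ := shift_notMem_of_lexMax hmax (by decide)
  have h₀₁ : shift v (0,1) ∉ σ := shift_notMem_of_lexMax hmax (by decide)
  have h₁₁ : shift v (1,1) ∉ σ := shift_notMem_of_lexMax hmax (by decide)
  have hb : shift (v - (1,1)) (1,0) = v - (0,1) := by ext <;> simp [shift]
  have ha : shift (v - (1,1)) (0,1) = v - (1,0) := by ext <;> simp [shift]
  have hup : shift (v - (1,0)) (1,1) = shift v (0,1) := by ext <;> simp [shift]
  have hdown : shift (v - (0,1)) (1,1) = shift v (1,0) := by ext <;> simp [shift]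
  simp only [eulerChar, edges, triangles,
    card_filter_shift_mem_erase hv h₁₀, card_filter_shift_mem_erase hv h₀₁,
    card_filter_shift_mem_erase hv h₁₁,
    card_filter_shift_mem_and_erase hv h₁₀ (hup ▸ h₀₁),
    card_filter_shift_mem_and_erase hv h₀₁ (hdown ▸ h₁₀), hb, ha,
    Finset.card_erase_of_mem hv]
  push_cast [Nat.cast_sub (Finset.card_pos.2 ⟨v, hv⟩)]
  ring

end LexMax

/-- Whether the edge from `x` to `y` crosses the ray from `p + (-1/4, 1/2)` in direction `(1, 0)`.
That starting point lies inside the face `{p - (1,0), p, p + (0,1)}`, so along a closed walk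
avoiding `p` the number of crossings is the winding number around `p` mod 2. -/
def rayCross (p x y : ℤ × ℤ) : ZMod 2 :=
  if (x.2 = p.2 ∧ y.2 = p.2 + 1 ∧ p.1 ≤ x.1) ∨ (x.2 = p.2 + 1 ∧ y.2 = p.2 ∧ p.1 ≤ y.1) then 1
  else 0

def IsCoboundaryOn {α : Type*} (R : α → α → Prop) (f : α → α → ZMod 2) : Prop :=
  ∃ g : α → ZMod 2, ∀ x y, R x y → f x y = g y - g x

namespace IsCoboundaryOn

variable {α : Type*} {R : α → α → Prop} {f f' : α → α → ZMod 2}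

lemma zero : IsCoboundaryOn R 0 := ⟨0, fun _ _ _ => by simp⟩

lemma add (hf : IsCoboundaryOn R f) (hf' : IsCoboundaryOn R f') : IsCoboundaryOn R (f + f') := by
  obtain ⟨g, hg⟩ := hf
  obtain ⟨g', hg'⟩ := hf'
  exact ⟨g + g', fun x y hxy => by simp only [Pi.add_apply, hg x y hxy, hg' x y hxy]; ring⟩

lemma neg (hf : IsCoboundaryOn R f) : IsCoboundaryOn R (-f) := by
  obtain ⟨g, hg⟩ := hf
  exact ⟨-g, fun x y hxy => by simp only [Pi.neg_apply, hg x y hxy]; ring⟩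

end IsCoboundaryOn

/-- The potential is the indicator of the points of row `p.2 + 1` lying between the rays of `p`
and `p + d`. -/
lemma rayCross_sub_rayCross_add {p d x y : ℤ × ℤ} (hd : d = (1,0) ∨ d = (0,1) ∨ d = (1,1))
    (hxy : TriAdj x y) (hx : x ≠ p ∧ x ≠ p + d) (hy : y ≠ p ∧ y ≠ p + d) :
    rayCross p x y - rayCross (p + d) x y =
      (if d.2 = 1 ∧ y.2 = p.2 + 1 ∧ p.1 + d.1 ≤ y.1 then 1 else 0) -
      (if d.2 = 1 ∧ x.2 = p.2 + 1 ∧ p.1 + d.1 ≤ x.1 then 1 else 0) := by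
  obtain ⟨e, he, rfl⟩ := triAdj_iff_exists.1 hxy
  obtain ⟨p1, p2⟩ := p
  obtain ⟨x1, x2⟩ := x
  simp only [ne_eq, Prod.ext_iff, Prod.fst_add, Prod.snd_add] at hx hy
  simp only [triNbrs, List.mem_cons, List.not_mem_nil, or_false] at he
  unfold rayCross
  rcases hd with rfl | rfl | rfl <;> rcases he with rfl | rfl | rfl | rfl | rfl | rfl <;>
    simp only [Prod.fst_add, Prod.snd_add, add_zero, zero_ne_one, false_and, true_and] at * <;>
    split_ifs <;> first | decide | omega

lemma isCoboundaryOn_rayCross_sub_of_triAdj {σ : Config} {p q : ℤ × ℤ} (hp : p ∉ σ) (hq : q ∉ σ)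
    (hpq : TriAdj p q) : IsCoboundaryOn (OccAdj σ) (rayCross p - rayCross q) := by
  have hne : ∀ {r x}, r ∉ σ → x ∈ σ → x ≠ r := fun hr hx h => hr (h ▸ hx)
  have key : ∀ p d, (d = (1,0) ∨ d = (0,1) ∨ d = (1,1)) → p ∉ σ → p + d ∉ σ →
      IsCoboundaryOn (OccAdj σ) (rayCross p - rayCross (p + d)) := fun p d hd hp hq =>
    ⟨_, fun x y ⟨hxy, hx, hy⟩ => rayCross_sub_rayCross_add hd hxy ⟨hne hp hx, hne hq hx⟩
      ⟨hne hp hy, hne hq hy⟩⟩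
  obtain ⟨d, hd, rfl | rfl⟩ := hpq.exists_eq_add_or_eq_add
  · exact key p d hd hp hq
  · simpa only [neg_sub] using (key q d hd hq hp).neg

lemma isCoboundaryOn_rayCross_sub_of_reflTransGen {σ : Config} {p q : ℤ × ℤ}
    (h : Relation.ReflTransGen (FreeAdj σ) p q) :
    IsCoboundaryOn (OccAdj σ) (rayCross p - rayCross q) := by
  induction h with
  | refl => simpa only [sub_self] using IsCoboundaryOn.zero
  | tail _ hqr ih =>
    simpa only [sub_add_sub_cancel] using
      ih.add (isCoboundaryOn_rayCross_sub_of_triAdj hqr.2.1 hqr.2.2 hqr.1)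

lemma rayCross_eq_sub_of_le {z x y : ℤ × ℤ} (hxy : TriAdj x y) (hx : z.1 ≤ x.1)
    (hy : z.1 ≤ y.1) :
    rayCross z x y = (if z.2 + 1 ≤ y.2 then 1 else 0) - (if z.2 + 1 ≤ x.2 then 1 else 0) := by
  rw [triAdj_iff] at hxy
  unfold rayCross
  split_ifs <;> first | decide | omega

lemma exists_mem_isCoboundaryOn_rayCross {S : Set (ℤ × ℤ)} (hS : S.Infinite) (σ : Config) :
    ∃ z ∈ S, IsCoboundaryOn (OccAdj σ) (rayCross z) := by
  obtain ⟨l, hl⟩ := σ.bddBelow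
  obtain ⟨u, hu⟩ := σ.bddAbove
  obtain ⟨z, hzS, hz⟩ := hS.exists_notMem_finset (Finset.Icc (l.1, l.2 - 1) u)
  have hlu : ∀ x ∈ σ, (l.1 ≤ x.1 ∧ l.2 ≤ x.2) ∧ x.1 ≤ u.1 ∧ x.2 ≤ u.2 := fun x hx =>
    ⟨Prod.le_def.1 (hl hx), Prod.le_def.1 (hu hx)⟩
  simp only [Finset.mem_Icc, Prod.le_def] at hz
  refine ⟨z, hzS, ?_⟩
  by_cases hz₁ : z.1 < l.1
  · refine ⟨_, fun x y hxy => rayCross_eq_sub_of_le hxy.1 ?_ ?_⟩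
    · linarith [hlu x hxy.2.1]
    · linarith [hlu y hxy.2.2]
  · refine ⟨0, fun x y hxy => ?_⟩
    have := hlu x hxy.2.1
    have := hlu y hxy.2.2
    rw [rayCross, if_neg (by omega)]
    simp

/-- Hole-freeness enters here: `p` is moved along a free path to a point whose ray misses `σ` or
starts to the left of `σ`. -/
lemma isCoboundaryOn_rayCross {σ : Config} (hhole : HoleFree σ) {p : ℤ × ℤ} (hp : p ∉ σ) :
    IsCoboundaryOn (OccAdj σ) (rayCross p) := by
  obtain ⟨z, hpz, hz⟩ := exists_mem_isCoboundaryOn_rayCross (hhole p hp) σ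
  simpa only [sub_add_cancel] using (isCoboundaryOn_rayCross_sub_of_reflTransGen hpz).add hz

section LexMax

variable {σ : Config} {v : ℤ × ℤ}

lemma rayCross_eq_zero_of_lexMax {x y : ℤ × ℤ} (hmax : ∀ w ∈ σ, toLex w ≤ toLex v)
    (hc : v - (1,1) ∉ σ) (hxy : OccAdj (σ.erase v) x y) : rayCross (v - (1,1)) x y = 0 := by
  obtain ⟨hadj, hx, hy⟩ := hxy
  obtain ⟨hxv, hx⟩ := Finset.mem_erase.1 hx
  obtain ⟨hyv, hy⟩ := Finset.mem_erase.1 hy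
  have hxc : x ≠ v - (1,1) := fun h => hc (h ▸ hx)
  have hyc : y ≠ v - (1,1) := fun h => hc (h ▸ hy)
  have hlx := Prod.Lex.toLex_le_toLex.1 (hmax x hx)
  have hly := Prod.Lex.toLex_le_toLex.1 (hmax y hy)
  rw [triAdj_iff] at hadj
  simp only [ne_eq, Prod.ext_iff, Prod.fst_sub, Prod.snd_sub] at hxv hyv hxc hyc
  rw [rayCross, if_neg]
  simp only [Prod.fst_sub, Prod.snd_sub]
  omega

/-- A path from `v - (1,0)` to `v - (0,1)` avoiding `v` closes up through `v` to a cycle that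
crosses the ray of `v - (1,1)` exactly once, at the edge from `v - (0,1)` to `v`. -/
lemma not_reflTransGen_erase_of_lexMax (hhole : HoleFree σ) (hv : v ∈ σ)
    (hmax : ∀ w ∈ σ, toLex w ≤ toLex v) (ha : v - (1,0) ∈ σ) (hb : v - (0,1) ∈ σ)
    (hc : v - (1,1) ∉ σ) :
    ¬Relation.ReflTransGen (OccAdj (σ.erase v)) (v - (1,0)) (v - (0,1)) := by
  intro hab
  obtain ⟨g, hg⟩ := isCoboundaryOn_rayCross hhole hc
  have hconst : ∀ y, Relation.ReflTransGen (OccAdj (σ.erase v)) (v - (1,0)) y →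
      g (v - (1,0)) = g y := fun y h => by
    induction h with
    | refl => rfl
    | tail _ hyz ih =>
      have := hg _ _ ⟨hyz.1, Finset.mem_of_mem_erase hyz.2.1, Finset.mem_of_mem_erase hyz.2.2⟩
      rw [rayCross_eq_zero_of_lexMax hmax hc hyz, eq_comm, sub_eq_zero] at this
      exact ih.trans this.symm
  have hva := hg _ _ ⟨triAdj_iff.2 (by simp), hv, ha⟩
  have hbv := hg _ _ ⟨triAdj_iff.2 (by simp), hb, hv⟩
  rw [show rayCross (v - (1,1)) v (v - (1,0)) = 0 by simp [rayCross]; omega] at hva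
  rw [show rayCross (v - (1,1)) (v - (0,1)) v = 1 by simp [rayCross], ← hconst _ hab] at hbv
  have : (1 : ZMod 2) = 0 := by rw [hbv, ← neg_sub, ← hva, neg_zero]
  exact one_ne_zero this

lemma erase_eq_empty_of_lexMax (hconn : ConnectedConfig σ) (hv : v ∈ σ)
    (hmax : ∀ w ∈ σ, toLex w ≤ toLex v) (ha : v - (1,0) ∉ σ) (hb : v - (0,1) ∉ σ)
    (hc : v - (1,1) ∉ σ) : σ.erase v = ∅ :=
  Finset.eq_empty_of_forall_notMem fun x hx => by
    obtain ⟨hxv, hxσ⟩ := Finset.mem_erase.1 hx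
    obtain ⟨t, htv, -⟩ := exists_occAdj_reflTransGen_erase (hconn.2 x hxσ v hv) hxv
    rcases eq_of_occAdj_of_lexMax hmax htv with rfl | rfl | rfl
    exacts [ha htv.2.1, hb htv.2.1, hc htv.2.1]

lemma eulerChar_erase_eq_two_of_lexMax (hconn : ConnectedConfig σ) (hhole : HoleFree σ)
    (hv : v ∈ σ) (hmax : ∀ w ∈ σ, toLex w ≤ toLex v) (ha : v - (1,0) ∈ σ) (hb : v - (0,1) ∈ σ)
    (hc : v - (1,1) ∉ σ) (hcomp : ∀ t ∈ σ.erase v, eulerChar (occComponent (σ.erase v) t) = 1) :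
    eulerChar (σ.erase v) = 2 := by
  have hsep := not_reflTransGen_erase_of_lexMax hhole hv hmax ha hb hc
  have hnbr : ∀ t, OccAdj σ t v → t = v - (1,0) ∨ t = v - (0,1) := fun t htv => by
    rcases eq_of_occAdj_of_lexMax hmax htv with h | h | rfl
    exacts [.inl h, .inr h, absurd htv.2.1 hc]
  rw [erase_eq_union_occComponent hconn hv hnbr, eulerChar_union (disjoint_occComponent hsep)
    (not_triAdj_of_mem_occComponent hsep), hcomp _ (Finset.mem_erase.2 ⟨by simp, ha⟩),
    hcomp _ (Finset.mem_erase.2 ⟨by simp, hb⟩)]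
  rfl

lemma eulerChar_eq_one_of_lexMax (hconn : ConnectedConfig σ) (hhole : HoleFree σ) (hv : v ∈ σ)
    (hmax : ∀ w ∈ σ, toLex w ≤ toLex v)
    (hcomp : ∀ t ∈ σ.erase v, eulerChar (occComponent (σ.erase v) t) = 1) :
    eulerChar σ = 1 := by
  have hmem : ∀ d : ℤ × ℤ, d ≠ 0 → v - d ∈ σ → v - d ∈ σ.erase v := fun d hd h =>
    Finset.mem_erase.2 ⟨fun h' => hd (by simpa using h'), h⟩
  have hnbr := fun t (htv : OccAdj σ t v) => eq_of_occAdj_of_lexMax hmax htv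
  rw [eulerChar_eq_eulerChar_erase_of_lexMax hv hmax]
  by_cases hc : v - (1,1) ∈ σ
  · rw [erase_eq_occComponent_of_forall hconn hv (s := v - (1,1)) fun t htv => ?_,
      hcomp _ (hmem _ (by decide) hc)]
    · simp only [hc, true_and, if_true]
      ring
    · have ht := Finset.mem_erase.2 ⟨htv.1.ne, htv.2.1⟩
      rcases hnbr t htv with rfl | rfl | rfl
      · exact .single ⟨triAdj_iff.2 (by simp), hmem _ (by decide) hc, ht⟩
      · exact .single ⟨triAdj_iff.2 (by simp), hmem _ (by decide) hc, ht⟩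
      · exact .refl
  by_cases ha : v - (1,0) ∈ σ <;> by_cases hb : v - (0,1) ∈ σ
  · rw [eulerChar_erase_eq_two_of_lexMax hconn hhole hv hmax ha hb hc hcomp]
    simp [ha, hb, hc]
  · rw [erase_eq_occComponent_of_forall hconn hv (s := v - (1,0)) fun t htv => ?_,
      hcomp _ (hmem _ (by decide) ha)]
    · simp [ha, hb, hc]
    · rcases hnbr t htv with rfl | rfl | rfl
      exacts [.refl, absurd htv.2.1 hb, absurd htv.2.1 hc]
  · rw [erase_eq_occComponent_of_forall hconn hv (s := v - (0,1)) fun t htv => ?_,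
      hcomp _ (hmem _ (by decide) hb)]
    · simp [ha, hb, hc]
    · rcases hnbr t htv with rfl | rfl | rfl
      exacts [absurd htv.2.1 ha, .refl, absurd htv.2.1 hc]
  · rw [erase_eq_empty_of_lexMax hconn hv hmax ha hb hc, eulerChar_empty]
    simp [ha, hb, hc]

end LexMax

theorem eulerChar_eq_one {σ : Config} (hconn : ConnectedConfig σ) (hhole : HoleFree σ) :
    eulerChar σ = 1 := by
  induction σ using Finset.strongInduction with
  | H σ ih =>
    obtain ⟨v, hv, hmax⟩ := σ.exists_max_image toLex hconn.1
    refine eulerChar_eq_one_of_lexMax hconn hhole hv hmax fun t ht => ?_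
    have hfree : shift v (1,0) ∉ σ := shift_notMem_of_lexMax hmax (by decide)
    exact ih _ (occComponent_subset.trans_ssubset (Finset.erase_ssubset hv))
      (connectedConfig_occComponent ht)
      (holeFree_occComponent_erase hconn hhole hv hfree (triAdj_iff.2 (by simp [shift])) t)

/-- if a connected hole-free configuration σ has perimeter k, then
the boundary of the corresponding union A_σ of hexagonal faces in the dual
hexagonal lattice is a (self-avoiding) polygon with exactly 2k + 6 edges. -/
theorem dual_hex_boundary (σ : Config) (k : ℕ)
    (hconn : ConnectedConfig σ) (hhole : HoleFree σ) (hk : perim σ = k) :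
    hexBoundaryEdges σ = 2 * k + 6 := by
  have hhex := hexBoundaryEdges_add_two_mul_edges σ
  have hperim := perim_add_three_mul_triangles σ
  have heuler := eulerChar_eq_one hconn hhole
  rw [eulerChar] at heuler
  omega
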